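/- d_I(χ_{[0,4)} ⊕ χ_{[3,7)}, χ_{[0,7)} ⊕ χ_{[3,4)}) = 3. (This computes the even cohomology interleaving distance over ℚ between the spaces M₀ and M₁ over BS¹ whose relative Sullivan models are (∧u,0) → (∧(x,y,z,u), d) with dz = j·xyu + u⁴ for j = 0, 1; their even-degree cohomologies are the ℚ[t]-modules ℚ[t]/(t⁴) ⊕ Σ⁻³ℚ[t]/(t⁴) and ℚ[t]/(t⁷) ⊕ Σ⁻³ℚ[t]/(t), with the displayed barcodes.) -/

import Mathlib

open scoped ENNReal

/-- A persistence module: a functor from the poset `(ℝ, ≤)` to `K`-vector spaces,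
presented by its structure maps. -/
structure PersistenceModule (K : Type) [Field K] where
  X : ℝ → Type
  [addCommGroupX : ∀ a, AddCommGroup (X a)]
  [moduleX : ∀ a, Module K (X a)]
  map : ∀ {a b : ℝ}, a ≤ b → (X a →ₗ[K] X b)
  map_refl : ∀ a : ℝ, map (le_refl a) = LinearMap.id
  map_trans : ∀ {a b c : ℝ} (hab : a ≤ b) (hbc : b ≤ c),
      map (hab.trans hbc) = (map hbc).comp (map hab)

attribute [instance] PersistenceModule.addCommGroupX PersistenceModule.moduleX

/-- The pair `(φ, ψ)` is an `ε`-interleaving between the persistence modules `F` and `G`: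
both are natural transformations (to the `ε`-shifts) and the two triangle identities hold. -/
structure IsInterleaving (K : Type) [Field K] (ε : ℝ) (F G : PersistenceModule K)
    (φ : ∀ a : ℝ, F.X a →ₗ[K] G.X (a + ε))
    (ψ : ∀ a : ℝ, G.X a →ₗ[K] F.X (a + ε)) : Prop where
  nonneg : 0 ≤ ε
  φ_nat : ∀ {a b : ℝ} (hab : a ≤ b),
      (φ b).comp (F.map hab) = (G.map (add_le_add hab (le_refl ε))).comp (φ a)
  ψ_nat : ∀ {a b : ℝ} (hab : a ≤ b),
      (ψ b).comp (G.map hab) = (F.map (add_le_add hab (le_refl ε))).comp (ψ a)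
  tri₁ : ∀ (a : ℝ) (h : a ≤ a + ε + ε), (ψ (a + ε)).comp (φ a) = F.map h
  tri₂ : ∀ (a : ℝ) (h : a ≤ a + ε + ε), (φ (a + ε)).comp (ψ a) = G.map h

/-- `F` and `G` are `ε`-interleaved. -/
def Interleaved (K : Type) [Field K] (ε : ℝ) (F G : PersistenceModule K) : Prop :=
  ∃ φ ψ, IsInterleaving K ε F G φ ψ

/-- The interleaving distance `d_I(F, G) ∈ [0, ∞]`: the infimum of the set of `ε ≥ 0` such
that `F` and `G` are `ε`-interleaved (`∞` when this set is empty). -/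
noncomputable def interleavingDist (K : Type) [Field K] (F G : PersistenceModule K) : ℝ≥0∞ :=
  sInf {x : ℝ≥0∞ | ∃ ε : ℝ, 0 ≤ ε ∧ Interleaved K ε F G ∧ x = ENNReal.ofReal ε}

attribute [local instance] Classical.propDecidable

lemma subsingleton_ite_bot (K : Type) [Field K] {J : Set ℝ} {a : ℝ} (ha : a ∉ J) :
    Subsingleton ↥(if a ∈ J then (⊤ : Submodule K K) else ⊥) := by
  rw [if_neg ha]
  infer_instance

/-- The interval module `χ_J` associated with an interval `J ⊆ ℝ`: the vector space `K`
at points of `J` (realized as `⊤ ≤ K`), and `0` elsewhere, with identity/zero structure maps. -/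
noncomputable def intervalModule (K : Type) [Field K] (J : Set ℝ) (hJ : J.OrdConnected) :
    PersistenceModule K where
  X a := ↥(if a ∈ J then (⊤ : Submodule K K) else ⊥)
  map {a b} hab :=
    if h : a ∈ J ∧ b ∈ J then
      Submodule.inclusion (le_of_eq (by rw [if_pos h.1, if_pos h.2]))
    else 0
  map_refl a := by
    try dsimp only
    by_cases ha : a ∈ J
    · rw [dif_pos ⟨ha, ha⟩]
      rfl
    · rw [dif_neg (fun h => ha h.1)]
      haveI := subsingleton_ite_bot K (J := J) ha
      exact LinearMap.ext fun x => Subsingleton.elim _ _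
  map_trans := by
    intro a b c hab hbc
    try dsimp only
    by_cases hac : a ∈ J ∧ c ∈ J
    · have hb : b ∈ J := hJ.out hac.1 hac.2 ⟨hab, hbc⟩
      rw [dif_pos hac, dif_pos ⟨hb, hac.2⟩, dif_pos ⟨hac.1, hb⟩]
      rfl
    · rw [dif_neg hac]
      rcases not_and_or.mp hac with ha | hc
      · haveI := subsingleton_ite_bot K (J := J) ha
        exact LinearMap.ext fun x => by
          rw [Subsingleton.elim x 0]
          simp
      · haveI := subsingleton_ite_bot K (J := J) hc
        exact LinearMap.ext fun x => Subsingleton.elim _ _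

/-- The interval module `χ_{[a,b)}`. -/
noncomputable def chiIco (K : Type) [Field K] (a b : ℝ) : PersistenceModule K :=
  intervalModule K (Set.Ico a b) Set.ordConnected_Ico

/-- The interval module `χ_{[a,∞)}`. -/
noncomputable def chiIci (K : Type) [Field K] (a : ℝ) : PersistenceModule K :=
  intervalModule K (Set.Ici a) Set.ordConnected_Ici

/-- The zero persistence module `χ_∅`. -/
noncomputable def zeroPM (K : Type) [Field K] : PersistenceModule K :=
  intervalModule K (∅ : Set ℝ) Set.ordConnected_empty

/-- The pointwise direct sum of a family of persistence modules. -/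
noncomputable def dsum (K : Type) [Field K] {ι : Type} (F : ι → PersistenceModule K) :
    PersistenceModule K where
  X a := Π₀ i, (F i).X a
  map {a b} hab := DFinsupp.mapRange.linearMap fun i => (F i).map hab
  map_refl a := by
    try dsimp only
    have : (fun i => (F i).map (le_refl a))
        = fun i => (LinearMap.id : (F i).X a →ₗ[K] (F i).X a) :=
      funext fun i => (F i).map_refl a
    rw [this]
    exact DFinsupp.mapRange.linearMap_id
  map_trans {a b c} hab hbc := by
    try dsimp only
    have : (fun i => (F i).map (hab.trans hbc)) =
        fun i => ((F i).map hbc).comp ((F i).map hab) :=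
      funext fun i => (F i).map_trans hab hbc
    rw [this]
    exact DFinsupp.mapRange.linearMap_comp _ _


section InterleavingAux

variable {K : Type} [Field K]

/-- A canonical map between the fibers of two interval modules: identity-like when both
memberships hold, zero otherwise. -/
noncomputable def imap (J J' : Set ℝ) (a b : ℝ) :
    ↥(if a ∈ J then (⊤ : Submodule K K) else ⊥) →ₗ[K]
      ↥(if b ∈ J' then (⊤ : Submodule K K) else ⊥) :=
  if h : a ∈ J ∧ b ∈ J' then
    Submodule.inclusion (le_of_eq (by rw [if_pos h.1, if_pos h.2]))
  else 0

lemma imap_eq_zero {J J' : Set ℝ} {a b : ℝ} (h : ¬(a ∈ J ∧ b ∈ J')) :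
    (imap (K := K) J J' a b) = 0 := dif_neg h

lemma imap_val {J J' : Set ℝ} {a b : ℝ} (h : a ∈ J ∧ b ∈ J') (x) :
    ((imap (K := K) J J' a b) x).val = x.val := by
  unfold imap
  rw [dif_pos h]
  rfl

/-- The generator of an interval module fiber. -/
noncomputable def igen (J : Set ℝ) {a : ℝ} (ha : a ∈ J) :
    ↥(if a ∈ J then (⊤ : Submodule K K) else ⊥) :=
  ⟨1, by rw [if_pos ha]; trivial⟩

lemma imap_comp {J J' J'' : Set ℝ} {a b c : ℝ} (h : a ∈ J → c ∈ J'' → b ∈ J') :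
    ((imap (K := K) J' J'' b c).comp (imap J J' a b)) = imap J J'' a c := by
  by_cases ha : a ∈ J
  · by_cases hc : c ∈ J''
    · have hb := h ha hc
      unfold imap
      rw [dif_pos ⟨hb, hc⟩, dif_pos ⟨ha, hb⟩, dif_pos ⟨ha, hc⟩]
      rfl
    · rw [imap_eq_zero (fun hx => hc hx.2), imap_eq_zero (K := K) (fun hx => hc hx.2),
        LinearMap.zero_comp]
  · haveI := subsingleton_ite_bot K (J := J) ha
    exact LinearMap.ext fun x => by rw [Subsingleton.elim x 0]; simp

variable {β γ δ : Fin 2 → Type} [∀ i, AddCommGroup (β i)] [∀ i, Module K (β i)]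
  [∀ i, AddCommGroup (γ i)] [∀ i, Module K (γ i)]
  [∀ i, AddCommGroup (δ i)] [∀ i, Module K (δ i)]

/-- The linear map on direct sums supported on the first coordinate. -/
noncomputable def sw (m : β 0 →ₗ[K] γ 0) : (Π₀ i, β i) →ₗ[K] Π₀ i, γ i :=
  (DFinsupp.lsingle 0).comp (m.comp (DFinsupp.lapply 0))

lemma sw_comp (m' : γ 0 →ₗ[K] δ 0) (m : β 0 →ₗ[K] γ 0) :
    (sw m').comp (sw m) = sw (m'.comp m) := by
  refine LinearMap.ext fun x => ?_
  simp [sw]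

lemma mapRange_comp_sw (f : ∀ i, γ i →ₗ[K] δ i) (m : β 0 →ₗ[K] γ 0) :
    (DFinsupp.mapRange.linearMap f).comp (sw m) = sw ((f 0).comp m) := by
  refine LinearMap.ext fun x => DFinsupp.ext fun i => ?_
  fin_cases i
  · simp [sw]
  · simp [sw, DFinsupp.single_eq_of_ne]

lemma sw_comp_mapRange (f : ∀ i, β i →ₗ[K] γ i) (m : γ 0 →ₗ[K] δ 0) :
    (sw m).comp (DFinsupp.mapRange.linearMap f) = sw (m.comp (f 0)) := by
  refine LinearMap.ext fun x => ?_
  simp [sw]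

lemma mapRange_eq_sw (f : ∀ i, β i →ₗ[K] γ i) (h1 : f 1 = 0) :
    DFinsupp.mapRange.linearMap f = sw (f 0) := by
  refine LinearMap.ext fun x => DFinsupp.ext fun i => ?_
  fin_cases i
  · simp [sw]
  · simp [sw, DFinsupp.single_eq_of_ne, h1]

lemma mapRange_eq_zero (f : ∀ i, β i →ₗ[K] γ i) (h0 : f 0 = 0) (h1 : f 1 = 0) :
    DFinsupp.mapRange.linearMap f = 0 := by
  refine LinearMap.ext fun x => DFinsupp.ext fun i => ?_
  fin_cases i
  · simp [h0]
  · simp [h1]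

lemma dsum_map (F : Fin 2 → PersistenceModule K) {a b : ℝ} (hab : a ≤ b) :
    (dsum K F).map hab = DFinsupp.mapRange.linearMap (fun i => (F i).map hab) := rfl

end InterleavingAux

/-- `d_I(χ_{[0,4)} ⊕ χ_{[3,7)}, χ_{[0,7)} ⊕ χ_{[3,4)}) = 3`
(the even cohomology interleaving distance over `ℚ` between the spaces `M₀` and `M₁`
over `BS¹`). -/
theorem interleavingDist_M0_M1 {K : Type} [Field K] :
    interleavingDist K (dsum K ![chiIco K 0 4, chiIco K 3 7])
      (dsum K ![chiIco K 0 7, chiIco K 3 4]) = 3 := by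
  refine le_antisymm ?_ ?_
  · -- upper bound: a 3-interleaving
    apply sInf_le
    refine ⟨3, by norm_num, ?_, by norm_num⟩
    refine ⟨fun a => sw (imap (Set.Ico 0 4) (Set.Ico 0 7) a (a + 3)),
            fun a => sw (imap (Set.Ico 0 7) (Set.Ico 0 4) a (a + 3)),
            by norm_num, ?_, ?_, ?_, ?_⟩
    · -- φ naturality
      intro a b hab
      show (sw (imap (Set.Ico 0 4) (Set.Ico 0 7) b (b + 3))).comp
          ((dsum K ![chiIco K 0 4, chiIco K 3 7]).map hab)
        = ((dsum K ![chiIco K 0 7, chiIco K 3 4]).map (add_le_add hab (le_refl 3))).comp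
          (sw (imap (Set.Ico 0 4) (Set.Ico 0 7) a (a + 3)))
      erw [dsum_map, dsum_map, sw_comp_mapRange, mapRange_comp_sw]
      congr 1
      show (imap (K := K) (Set.Ico 0 4) (Set.Ico 0 7) b (b + 3)).comp
            (imap (Set.Ico 0 4) (Set.Ico 0 4) a b)
        = (imap (K := K) (Set.Ico 0 7) (Set.Ico 0 7) (a + 3) (b + 3)).comp
            (imap (Set.Ico 0 4) (Set.Ico 0 7) a (a + 3))
      rw [imap_comp (fun h1 h2 => by simp only [Set.mem_Ico] at *; constructor <;> linarith),
          imap_comp (fun h1 h2 => by simp only [Set.mem_Ico] at *; constructor <;> linarith)]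
    · -- ψ naturality
      intro a b hab
      show (sw (imap (Set.Ico 0 7) (Set.Ico 0 4) b (b + 3))).comp
          ((dsum K ![chiIco K 0 7, chiIco K 3 4]).map hab)
        = ((dsum K ![chiIco K 0 4, chiIco K 3 7]).map (add_le_add hab (le_refl 3))).comp
          (sw (imap (Set.Ico 0 7) (Set.Ico 0 4) a (a + 3)))
      erw [dsum_map, dsum_map, sw_comp_mapRange, mapRange_comp_sw]
      congr 1
      show (imap (K := K) (Set.Ico 0 7) (Set.Ico 0 4) b (b + 3)).comp
            (imap (Set.Ico 0 7) (Set.Ico 0 7) a b)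
        = (imap (K := K) (Set.Ico 0 4) (Set.Ico 0 4) (a + 3) (b + 3)).comp
            (imap (Set.Ico 0 7) (Set.Ico 0 4) a (a + 3))
      rw [imap_comp (fun h1 h2 => by simp only [Set.mem_Ico] at *; constructor <;> linarith),
          imap_comp (fun h1 h2 => by simp only [Set.mem_Ico] at *; constructor <;> linarith)]
    · -- triangle 1
      intro a h
      show ((sw (β := fun i => (![chiIco K 0 7, chiIco K 3 4] i).X (a + 3))
              (γ := fun i => (![chiIco K 0 4, chiIco K 3 7] i).X (a + 3 + 3))
              (imap (Set.Ico 0 7) (Set.Ico 0 4) (a + 3) (a + 3 + 3))).comp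
            (sw (β := fun i => (![chiIco K 0 4, chiIco K 3 7] i).X a)
              (γ := fun i => (![chiIco K 0 7, chiIco K 3 4] i).X (a + 3))
              (imap (Set.Ico 0 4) (Set.Ico 0 7) a (a + 3))))
        = (dsum K ![chiIco K 0 4, chiIco K 3 7]).map h
      erw [sw_comp, dsum_map,
        mapRange_eq_sw (fun i => (![chiIco K 0 4, chiIco K 3 7] i).map h)
          (imap_eq_zero (K := K) (J := Set.Ico 3 7) (J' := Set.Ico 3 7)
          (fun hx => by simp only [Set.mem_Ico] at hx; linarith [hx.1.1, hx.2.2]))]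
      congr 1
      show (imap (K := K) (Set.Ico 0 7) (Set.Ico 0 4) (a + 3) (a + 3 + 3)).comp
            (imap (Set.Ico 0 4) (Set.Ico 0 7) a (a + 3))
        = imap (Set.Ico 0 4) (Set.Ico 0 4) a (a + 3 + 3)
      exact imap_comp (fun h1 h2 => by
        simp only [Set.mem_Ico] at *; constructor <;> linarith)
    · -- triangle 2
      intro a h
      show ((sw (β := fun i => (![chiIco K 0 4, chiIco K 3 7] i).X (a + 3))
              (γ := fun i => (![chiIco K 0 7, chiIco K 3 4] i).X (a + 3 + 3))
              (imap (Set.Ico 0 4) (Set.Ico 0 7) (a + 3) (a + 3 + 3))).comp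
            (sw (β := fun i => (![chiIco K 0 7, chiIco K 3 4] i).X a)
              (γ := fun i => (![chiIco K 0 4, chiIco K 3 7] i).X (a + 3))
              (imap (Set.Ico 0 7) (Set.Ico 0 4) a (a + 3))))
        = (dsum K ![chiIco K 0 7, chiIco K 3 4]).map h
      erw [sw_comp, dsum_map,
        mapRange_eq_sw (fun i => (![chiIco K 0 7, chiIco K 3 4] i).map h)
          (imap_eq_zero (K := K) (J := Set.Ico 3 4) (J' := Set.Ico 3 4)
          (fun hx => by simp only [Set.mem_Ico] at hx; linarith [hx.1.1, hx.2.2]))]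
      congr 1
      show (imap (K := K) (Set.Ico 0 4) (Set.Ico 0 7) (a + 3) (a + 3 + 3)).comp
            (imap (Set.Ico 0 7) (Set.Ico 0 4) a (a + 3))
        = imap (Set.Ico 0 7) (Set.Ico 0 7) a (a + 3 + 3)
      exact imap_comp (fun h1 h2 => by
        simp only [Set.mem_Ico] at *; constructor <;> linarith)
  · -- lower bound
    refine le_sInf fun x hx => ?_
    obtain ⟨ε, hε0, ⟨φ, ψ, hI⟩, rfl⟩ := hx
    have h3 : 3 ≤ ε := by
      by_contra hlt
      push_neg at hlt
      have h4 : (0 : ℝ) + ε ≤ 4 := by linarith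
      have hF0 : (dsum K ![chiIco K 0 4, chiIco K 3 7]).map h4 = 0 := by
        rw [dsum_map]
        refine mapRange_eq_zero _ ?_ ?_
        · exact imap_eq_zero (fun hx => by
            simp only [Set.mem_Ico] at hx; linarith [hx.2.2])
        · exact imap_eq_zero (fun hx => by
            simp only [Set.mem_Ico] at hx; linarith [hx.1.1])
      have h1 : (0 : ℝ) ≤ 0 + ε + ε := by linarith
      have h2 : (0 : ℝ) + ε + ε ≤ 4 + ε := by linarith
      have h04 : (0 : ℝ) ≤ 4 + ε := by linarith
      have key : (dsum K ![chiIco K 0 7, chiIco K 3 4]).map h04 = 0 := by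
        calc (dsum K ![chiIco K 0 7, chiIco K 3 4]).map h04
            = ((dsum K ![chiIco K 0 7, chiIco K 3 4]).map h2).comp
                ((dsum K ![chiIco K 0 7, chiIco K 3 4]).map h1) :=
              (dsum K ![chiIco K 0 7, chiIco K 3 4]).map_trans h1 h2
          _ = ((dsum K ![chiIco K 0 7, chiIco K 3 4]).map h2).comp
                ((φ (0 + ε)).comp (ψ 0)) := by rw [hI.tri₂ 0 h1]
          _ = (((dsum K ![chiIco K 0 7, chiIco K 3 4]).map h2).comp (φ (0 + ε))).comp (ψ 0) := by
              rw [LinearMap.comp_assoc]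
          _ = ((φ 4).comp ((dsum K ![chiIco K 0 4, chiIco K 3 7]).map h4)).comp (ψ 0) := by
              rw [hI.φ_nat h4]
          _ = 0 := by rw [hF0]; simp
      have h07 : (0 : ℝ) ∈ Set.Ico (0 : ℝ) 7 := ⟨le_refl 0, by norm_num⟩
      have h47 : 4 + ε ∈ Set.Ico (0 : ℝ) 7 := ⟨by linarith, by linarith⟩
      let v : Π₀ i, (![chiIco K 0 7, chiIco K 3 4] i).X 0 :=
        DFinsupp.single 0 (igen (K := K) (Set.Ico 0 7) h07)
      have hkey := LinearMap.congr_fun key v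
      rw [dsum_map] at hkey
      have h2 := congrArg
        (fun z : Π₀ i, (![chiIco K 0 7, chiIco K 3 4] i).X (4 + ε) => z 0) hkey
      have hc : (imap (K := K) (Set.Ico 0 7) (Set.Ico 0 7) 0 (4 + ε)) (v 0) = 0 := h2
      have hval := congrArg Subtype.val hc
      erw [imap_val ⟨h07, h47⟩] at hval
      have hv0 : v 0 = igen (K := K) (Set.Ico 0 7) h07 := DFinsupp.single_eq_same
      rw [hv0] at hval
      exact one_ne_zero (α := K) hval
    calc (3 : ℝ≥0∞) = ENNReal.ofReal 3 := by norm_num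
      _ ≤ ENNReal.ofReal ε := ENNReal.ofReal_le_ofReal h3
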